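/- Let Ω, Ω_X, Ω_Y be topological spaces and let X : Ω → Ω_X and Y : Ω → Ω_Y be functions. Suppose that X is continuous with respect to the initial topology of Y (i.e. for every open set U ⊆ Ω_X there exists an open set V ⊆ Ω_Y with X⁻¹(U) = Y⁻¹(V)), and that the image X(Ω), equipped with the subspace topology from Ω_X, is a T₀ space. Then there exists a unique continuous function φ : Y(Ω) → Ω_X (where Y(Ω) carries the subspace topology from Ω_Y) such that X(ω) = φ(Y(ω)) for all ω ∈ Ω. -/

import Mathlib

/-!
Give `Ω` the initial topology of `Y`. Then `X` is continuous, and the corestriction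
`Ω → Y(Ω)` of `Y` is an inducing surjection, hence a quotient map. If `Y ω₁ = Y ω₂`, the points
`ω₁, ω₂` are inseparable in `Ω`, so `X ω₁, X ω₂` are inseparable in the T₀ space `X(Ω)`, hence
equal. Thus `X` is constant on the fibres of the quotient map and descends to a unique continuous
`φ` on `Y(Ω)`.
-/

open Function Set Topology

theorem Topology.IsInducing.rangeFactorization {Ω β : Type*} [TopologicalSpace Ω]
    [TopologicalSpace β] {Y : Ω → β} (hY : IsInducing Y) :
    IsInducing (rangeFactorization Y) :=
  IsInducing.subtypeVal.of_comp_iff.mp hY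

theorem Continuous.factorsThrough_of_isInducing {Ω α β : Type*} [TopologicalSpace Ω]
    [TopologicalSpace α] [TopologicalSpace β] {X : Ω → α} {Y : Ω → β} (hX : Continuous X)
    (hY : IsInducing Y) [T0Space (range X)] : FactorsThrough X Y := fun a b hab ↦ by
  have hXab : Inseparable (X a) (X b) := (hY.inseparable_iff.mp (.of_eq hab)).map hX
  have : Inseparable (Set.rangeFactorization X a) (Set.rangeFactorization X b) :=
    IsInducing.subtypeVal.inseparable_iff.mp hXab
  exact congrArg Subtype.val this.eq

theorem topological_doob_dynkin_general {Ω ΩX ΩY : Type*}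
    [TopologicalSpace ΩX] [TopologicalSpace ΩY]
    (X : Ω → ΩX) (Y : Ω → ΩY)
    (hX : ∀ U : Set ΩX, IsOpen U → ∃ V : Set ΩY, IsOpen V ∧ X ⁻¹' U = Y ⁻¹' V)
    (hT0 : T0Space (Set.range X)) :
    ∃! φ : Set.range Y → ΩX, Continuous φ ∧
      ∀ ω : Ω, X ω = φ ⟨Y ω, Set.mem_range_self ω⟩ := by
  let _ : TopologicalSpace Ω := .induced Y ‹_›
  have hXc : Continuous X := continuous_def.2 fun U hU ↦ by
    obtain ⟨V, hV, hXV⟩ := hX U hU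
    exact isOpen_induced_iff.2 ⟨V, hV, hXV.symm⟩
  have hYi : IsInducing (rangeFactorization Y) := (IsInducing.induced Y).rangeFactorization
  let π : C(Ω, range Y) := ⟨rangeFactorization Y, hYi.continuous⟩
  have hq : IsQuotientMap π := hYi.isQuotientMap_of_surjective rangeFactorization_surjective
  have hfac : FactorsThrough X π := hXc.factorsThrough_of_isInducing hYi
  let φ := hq.lift ⟨X, hXc⟩ hfac
  have hφ : φ ∘ π = X := congrArg (⇑) (hq.lift_comp ⟨X, hXc⟩ hfac)
  refine ⟨φ, ⟨φ.continuous, fun ω ↦ (congrFun hφ ω).symm⟩, fun ψ ⟨_, hψ⟩ ↦ ?_⟩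
  exact hq.surjective.injective_comp_right (hφ.trans (funext hψ)).symm

/-- **Topological Doob-Dynkin lemma.** If `X` is continuous with respect to the
initial topology of `Y`, and the image of `X` (with the subspace topology) is a
T₀ space, then there exists a unique continuous `φ : Y(Ω) → Ω_X` with `X = φ ∘ Y`. -/
theorem topological_doob_dynkin {Ω ΩX ΩY : Type*}
    [TopologicalSpace Ω] [TopologicalSpace ΩX] [TopologicalSpace ΩY]
    (X : Ω → ΩX) (Y : Ω → ΩY)
    (hX : ∀ U : Set ΩX, IsOpen U → ∃ V : Set ΩY, IsOpen V ∧ X ⁻¹' U = Y ⁻¹' V)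
    (hT0 : T0Space (Set.range X)) :
    ∃! φ : Set.range Y → ΩX, Continuous φ ∧
      ∀ ω : Ω, X ω = φ ⟨Y ω, Set.mem_range_self ω⟩ :=
  topological_doob_dynkin_general X Y hX hT0
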